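/- Let A be a bineighborly real central hyperplane arrangement with fundamental chamber c₀, so the chamber poset P(A,c₀) is a lattice. Then for all chambers x, y, the separation set S(c₀, x ∨ y) equals the 2-closure of S(c₀,x) ∪ S(c₀,y). -/

import Mathlib

open Matrix
open scoped Classical

/-- Ambient space: `ℝⁿ`. -/
abbrev V (n : ℕ) := Fin n → ℝ

/-- The linear functional `x ↦ v ⬝ᵥ x` determined by a normal vector. -/
def hypl {n : ℕ} (v : V n) : V n →ₗ[ℝ] ℝ where
  toFun x := v ⬝ᵥ x
  map_add' x y := by simp [dotProduct_add]
  map_smul' c x := by simp [dotProduct_smul]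

/-- Two normal vectors define the same hyperplane. -/
def SameHyp {n : ℕ} (u w : V n) : Prop := ∀ x, u ⬝ᵥ x = 0 ↔ w ⬝ᵥ x = 0

/-- A finite set of normal vectors represents a (central) hyperplane arrangement
if each normal is nonzero and distinct normals define distinct hyperplanes. -/
def IsArrangement {n : ℕ} (A : Finset (V n)) : Prop :=
  (∀ v ∈ A, v ≠ 0) ∧ ∀ u ∈ A, ∀ w ∈ A, SameHyp u w → u = w

/-- The point `x` realizes the sign vector `c` on the arrangement `A`. -/
def Realizes {n : ℕ} (A : Finset (V n)) (c : V n → Bool) (x : V n) : Prop :=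
  ∀ v ∈ A, if c v then 0 < v ⬝ᵥ x else v ⬝ᵥ x < 0

/-- A chamber of `A`, encoded by its sign vector. -/
def IsChamber {n : ℕ} (A : Finset (V n)) (c : V n → Bool) : Prop :=
  ∃ x, Realizes A c x

/-- The separation set of two chambers: hyperplanes on which their signs differ. -/
noncomputable def SepSet {n : ℕ} (A : Finset (V n)) (c d : V n → Bool) : Finset (V n) :=
  A.filter (fun v => c v ≠ d v)

/-- The localization of `A` at the subspace `ker u ∩ ker w`:
hyperplanes containing this subspace. -/
noncomputable def loc {n : ℕ} (A : Finset (V n)) (u w : V n) : Finset (V n) :=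
  A.filter (fun v => ∀ x, u ⬝ᵥ x = 0 → w ⬝ᵥ x = 0 → v ⬝ᵥ x = 0)

/-- `u, w` span a codimension-2 intersection subspace `ker u ∩ ker w` of `A`. -/
def Codim2 {n : ℕ} (A : Finset (V n)) (u w : V n) : Prop :=
  u ∈ A ∧ w ∈ A ∧ LinearIndependent ℝ ![u, w]

/-- `I` is biclosed w.r.t. the chamber `c₀`: its intersection with each rank-2
localization is the separation set of some chamber of the localization. -/
def IsBiclosed {n : ℕ} (A : Finset (V n)) (c₀ : V n → Bool) (I : Finset (V n)) : Prop :=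
  ∀ u w, Codim2 A u w →
    ∃ d, IsChamber (loc A u w) d ∧ I ∩ loc A u w = SepSet (loc A u w) c₀ d

/-- `I ⊆ A` is convex with respect to `c₀`. -/
def IsConvex {n : ℕ} (A : Finset (V n)) (c₀ : V n → Bool) (I : Finset (V n)) : Prop :=
  ∀ H ∈ A \ I, ∃ e, IsChamber A e ∧ H ∈ SepSet A c₀ e ∧ SepSet A c₀ e ⊆ A \ I

/-- `I` is 2-closed: its intersection with each rank-2 localization is convex there. -/
def Is2Closed {n : ℕ} (A : Finset (V n)) (c₀ : V n → Bool) (I : Finset (V n)) : Prop :=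
  ∀ u w, Codim2 A u w → IsConvex (loc A u w) c₀ (I ∩ loc A u w)

/-- `v` is a wall of the chamber `c`: some point of the closure of `c` lies on the
hyperplane of `v` and strictly off every other hyperplane of `A`. -/
def IsWall {n : ℕ} (A : Finset (V n)) (c : V n → Bool) (v : V n) : Prop :=
  v ∈ A ∧ ∃ x, v ⬝ᵥ x = 0 ∧ ∀ w ∈ A, ¬ SameHyp v w →
    (if c w then 0 < w ⬝ᵥ x else w ⬝ᵥ x < 0)

/-- The sign vector `v` is feasible: some point satisfies all its strict constraints. -/
def Feasible {n : ℕ} (A : Finset (V n)) (v : V n → SignType) : Prop :=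
  ∃ x : V n, ∀ h ∈ A, (v h = 1 → 0 < h ⬝ᵥ x) ∧ (v h = -1 → h ⬝ᵥ x < 0)

/-- A circuit of `A`: a minimal nonzero infeasible sign vector supported on `A`. -/
def IsCircuit {n : ℕ} (A : Finset (V n)) (v : V n → SignType) : Prop :=
  (∀ h, v h ≠ 0 → h ∈ A) ∧ (∃ h, v h ≠ 0) ∧ ¬ Feasible A v ∧
    ∀ w : V n → SignType, (∀ h, w h ≠ 0 → w h = v h) →
      {h | w h ≠ 0} ⊂ {h | v h ≠ 0} → Feasible A w

/-- A reduced gallery from `c₀` to `-c₀` in `A`, crossing hyperplanes `H 0, H 1, …`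
in order. -/
def IsGallery {n N : ℕ} (A : Finset (V n)) (c₀ : V n → Bool) (H : Fin N → V n)
    (d : Fin (N + 1) → V n → Bool) : Prop :=
  (∀ i, IsChamber A (d i)) ∧ d 0 = c₀ ∧ (∀ v ∈ A, d (Fin.last N) v = !c₀ v) ∧
    ∀ i : Fin N, SepSet A (d i.castSucc) (d i.succ) = {H i}

/-- The enumeration `H` of `A` is admissible: on every rank-2 localization, the
induced order is the crossing order of some reduced gallery of the localization. -/
def Admissible {n N : ℕ} (A : Finset (V n)) (c₀ : V n → Bool) (H : Fin N → V n) : Prop :=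
  ∀ u w, Codim2 A u w →
    ∃ (M : ℕ) (G : Fin M → V n) (e : Fin (M + 1) → V n → Bool) (φ : Fin M → Fin N),
      IsGallery (loc A u w) c₀ G e ∧ StrictMono φ ∧ ∀ k, G k = H (φ k)

/-- The intersection lattice of `A`, as a set of subspaces of `ℝⁿ`. -/
def InterLattice {n : ℕ} (A : Finset (V n)) : Set (Submodule ℝ (V n)) :=
  {X | ∃ S : Finset (V n), S ⊆ A ∧ X = S.inf (fun v => LinearMap.ker (hypl v))}

/-- A modular element of the intersection lattice of `A`. -/
def IsModular {n : ℕ} (A : Finset (V n)) (X : Submodule ℝ (V n)) : Prop :=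
  X ∈ InterLattice A ∧ ∀ Y ∈ InterLattice A, X ⊔ Y ∈ InterLattice A

/-- The rank of the arrangement `A`. -/
noncomputable def rankA {n : ℕ} (A : Finset (V n)) : ℕ :=
  Module.finrank ℝ (Submodule.span ℝ (A : Set (V n)))

/-- A modular flag: a maximal chain `⊤ = X 0 > X 1 > ⋯ > X r` of modular
elements of the intersection lattice, with `X i` of codimension `i`. -/
def IsModularFlag {n : ℕ} (A : Finset (V n)) (X : Fin (rankA A + 1) → Submodule ℝ (V n)) : Prop :=
  X 0 = ⊤ ∧ (∀ i, IsModular A (X i)) ∧ (∀ i j, i ≤ j → X j ≤ X i) ∧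
    ∀ i : Fin (rankA A + 1), Module.finrank ℝ (X i) = n - (i : ℕ)

/-- `A` is supersolvable: its intersection lattice has a modular flag. -/
def IsSupersolvable {n : ℕ} (A : Finset (V n)) : Prop :=
  ∃ X : Fin (rankA A + 1) → Submodule ℝ (V n), IsModularFlag A X

/-- The chamber `c` is incident to the subspace `X`:  some point of `X` lies in the
closure of `c` and strictly off every hyperplane of `A` not containing `X`. -/
def IncidentSub {n : ℕ} (A : Finset (V n)) (c : V n → Bool) (X : Submodule ℝ (V n)) : Prop :=
  ∃ x, x ∈ X ∧ ∀ v ∈ A, ¬ X ≤ LinearMap.ker (hypl v) →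
    (if c v then 0 < v ⬝ᵥ x else v ⬝ᵥ x < 0)

/-- The chamber `c` is incident to the codimension-2 subspace `ker u ∩ ker w`. -/
def IncidentLoc {n : ℕ} (A : Finset (V n)) (c : V n → Bool) (u w : V n) : Prop :=
  ∃ x, (∀ v ∈ loc A u w, v ⬝ᵥ x = 0) ∧ ∀ v ∈ A, v ∉ loc A u w →
    (if c v then 0 < v ⬝ᵥ x else v ⬝ᵥ x < 0)

/-- `(A, c₀)` is bineighborly: any chamber is incident to the intersection of any two
of its walls separating it from `-c₀`. -/
def Bineighborly {n : ℕ} (A : Finset (V n)) (c₀ : V n → Bool) : Prop :=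
  ∀ c, IsChamber A c → ∀ u w, IsWall A c u → IsWall A c w →
    u ∈ SepSet A c (fun v => !c₀ v) → w ∈ SepSet A c (fun v => !c₀ v) → IncidentLoc A c u w

/-- Every chamber of `A` is a simplicial cone: its walls are linearly independent
and span the same subspace as `A`. -/
def IsSimplicial {n : ℕ} (A : Finset (V n)) : Prop :=
  ∀ c, IsChamber A c →
    LinearIndependent ℝ ((↑) : {v // IsWall A c v} → V n) ∧
      Submodule.span ℝ {v | IsWall A c v} = Submodule.span ℝ (A : Set (V n))

/-!
A separation set is convex in every localization (the opposite chamber is the witness), so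
`S(c₀, j)` is 2-closed. For minimality fix a 2-closed `J ⊇ S(c₀, x) ∪ S(c₀, y)` and consider
the cover relation of `P(A, c₀)` restricted to separation sets contained in `J`. Both
`S(c₀, x)` and `S(c₀, y)` are reached from `∅`, by removing walls one at a time. The relation is
locally confluent: if the chamber `m` with `S(c₀, m) = S` is covered by `S ∪ {u}` and `S ∪ {w}`,
then `u, w` are walls of `m` and bineighborliness makes `m` incident to `X = H_u ∩ H_w`; every
chamber of the rank-two localization `A_X` can then be glued to `m` near `X`, and since the only
walls of `m` in `A_X` are `u, w ∈ J`, 2-closedness gives `A_X ⊆ J`. So both covers climb through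
`A_X` to `S ∪ A_X` inside `J`. Chains are bounded, so Newman's lemma yields a chamber `e` with
`S(c₀, x) ∪ S(c₀, y) ⊆ S(c₀, e) ⊆ J`, and `S(c₀, j) ⊆ S(c₀, e)` because `j` is the join.
-/

open Finset Filter Topology Relation
open scoped symmDiff

section

variable {n : ℕ}

def boolSign (b : Bool) : ℝ := if b then 1 else -1

lemma ite_sign_iff (b : Bool) (t : ℝ) : (if b then 0 < t else t < 0) ↔ 0 < boolSign b * t := by
  cases b <;> simp [boolSign]

@[simp] lemma boolSign_not (b : Bool) : boolSign (!b) = -boolSign b := by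
  cases b <;> simp [boolSign]

@[simp] lemma boolSign_mul_self (b : Bool) : boolSign b * boolSign b = 1 := by
  cases b <;> simp [boolSign]

lemma boolSign_ne_zero (b : Bool) : boolSign b ≠ 0 := by
  cases b <;> simp [boolSign]

lemma mul_eq_boolSign_mul_mul (b : Bool) (g t : ℝ) :
    g * t = g * boolSign b * (boolSign b * t) := by
  linear_combination -(g * t) * boolSign_mul_self b

lemma realizes_iff {A : Finset (V n)} {c : V n → Bool} {x : V n} :
    Realizes A c x ↔ ∀ v ∈ A, 0 < boolSign (c v) * (v ⬝ᵥ x) := by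
  simp only [Realizes, ite_sign_iff]

namespace Realizes

variable {A B : Finset (V n)} {c : V n → Bool} {x : V n}

lemma mono (h : Realizes A c x) (hBA : B ⊆ A) : Realizes B c x := fun v hv => h v (hBA hv)

lemma ne_zero (h : Realizes A c x) {v : V n} (hv : v ∈ A) : v ⬝ᵥ x ≠ 0 :=
  right_ne_zero_of_mul (realizes_iff.1 h v hv).ne'

lemma neg (h : Realizes A c x) : Realizes A (fun v => !c v) (-x) := by
  rw [realizes_iff] at h ⊢
  intro v hv
  simpa using h v hv

end Realizes

lemma isOpen_setOf_realizes (A : Finset (V n)) (c : V n → Bool) : IsOpen {x | Realizes A c x} := by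
  simp only [realizes_iff, Set.ofPred_forall]
  exact isOpen_biInter_finset fun v _ => isOpen_lt continuous_const (by fun_prop)

lemma Realizes.exists_pos_add_smul {A : Finset (V n)} {c : V n → Bool} {x : V n}
    (h : Realizes A c x) (ξ : V n) : ∃ t : ℝ, 0 < t ∧ Realizes A c (x + t • ξ) := by
  have hcont : Tendsto (fun t : ℝ => x + t • ξ) (𝓝[>] 0) (𝓝 x) := by
    have : Continuous fun t : ℝ => x + t • ξ := by fun_prop
    simpa using (this.tendsto 0).mono_left nhdsWithin_le_nhds
  exact ((hcont.eventually ((isOpen_setOf_realizes A c).mem_nhds h)).and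
    self_mem_nhdsWithin).exists.imp fun t ht => ⟨ht.2, ht.1⟩

namespace IsChamber

variable {A B : Finset (V n)} {c : V n → Bool}

lemma mono (h : IsChamber A c) (hBA : B ⊆ A) : IsChamber B c :=
  h.imp fun _ hx => hx.mono hBA

lemma neg (h : IsChamber A c) : IsChamber A (fun v => !c v) :=
  let ⟨x, hx⟩ := h; ⟨-x, hx.neg⟩

end IsChamber

section SepSet

variable {A B : Finset (V n)} {c₀ c d : V n → Bool} {v : V n}

@[simp] lemma mem_sepSet : v ∈ SepSet A c d ↔ v ∈ A ∧ c v ≠ d v := by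
  simp [SepSet]

lemma sepSet_subset : SepSet A c d ⊆ A := filter_subset _ _

lemma sepSet_comm : SepSet A c d = SepSet A d c := by
  ext v; simp [ne_comm]

lemma sepSet_inter_of_subset (hBA : B ⊆ A) : SepSet A c d ∩ B = SepSet B c d := by
  ext v; simp only [mem_inter, mem_sepSet]; have := @hBA v; tauto

lemma sepSet_eq_symmDiff : SepSet A c d = SepSet A c₀ c ∆ SepSet A c₀ d := by
  ext v; simp only [mem_symmDiff, mem_sepSet]
  cases c₀ v <;> cases c v <;> cases d v <;> simp

lemma mem_sepSet_not_iff : v ∈ SepSet A c (fun v => !c₀ v) ↔ v ∈ A ∧ v ∉ SepSet A c₀ c := by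
  simp only [mem_sepSet]; cases c₀ v <;> cases c v <;> simp

lemma sepSet_update_of_eq (hv : v ∈ A) (h : c₀ v = c v) :
    SepSet A c₀ (Function.update c v (!c v)) = insert v (SepSet A c₀ c) := by
  ext w; rcases eq_or_ne w v with rfl | hw <;> simp_all

lemma sepSet_update_of_ne (h : c₀ v ≠ c v) :
    SepSet A c₀ (Function.update c v (!c v)) = (SepSet A c₀ c).erase v := by
  ext w; rcases eq_or_ne w v with rfl | hw <;> simp_all

end SepSet

lemma dotProduct_self_pos {v : V n} (hv : v ≠ 0) : 0 < v ⬝ᵥ v := by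
  simpa using dotProduct_star_self_pos_iff.2 hv

namespace IsArrangement

variable {A B : Finset (V n)}

lemma mono (hA : IsArrangement A) (hBA : B ⊆ A) : IsArrangement B :=
  ⟨fun v hv => hA.1 v (hBA hv), fun u hu w hw h => hA.2 u (hBA hu) w (hBA hw) h⟩

lemma linearIndependent_pair (hA : IsArrangement A) {u w : V n} (hu : u ∈ A) (hw : w ∈ A)
    (huw : u ≠ w) : LinearIndependent ℝ ![u, w] := by
  rw [linearIndependent_fin2]
  refine ⟨hA.1 w hw, fun a h => huw (hA.2 u hu w hw fun x => ?_)⟩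
  simp only [Matrix.cons_val_one, Matrix.cons_val_zero] at h
  have ha : a ≠ 0 := by rintro rfl; exact hA.1 u hu (by simpa using h.symm)
  simp [← h, ha]

lemma codim2 (hA : IsArrangement A) {u w : V n} (hu : u ∈ A) (hw : w ∈ A) (huw : u ≠ w) :
    Codim2 A u w :=
  ⟨hu, hw, hA.linearIndependent_pair hu hw huw⟩

lemma isWall_iff (hB : IsArrangement B) {c : V n → Bool} {H : V n} :
    IsWall B c H ↔ H ∈ B ∧ ∃ x, H ⬝ᵥ x = 0 ∧ Realizes (B.erase H) c x := by
  refine ⟨fun ⟨hH, x, hx0, hx⟩ => ⟨hH, x, hx0, fun w hw => ?_⟩,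
    fun ⟨hH, x, hx0, hx⟩ => ⟨hH, x, hx0, fun w hw hs => hx w (mem_erase.2 ⟨?_, hw⟩)⟩⟩
  · have hwB := mem_of_mem_erase hw
    exact hx w hwB fun hs => ne_of_mem_erase hw (hB.2 H hH w hwB hs).symm
  · rintro rfl; exact hs fun _ => Iff.rfl

end IsArrangement

namespace IsWall

variable {A B : Finset (V n)} {c c' : V n → Bool} {H : V n}

lemma mono (h : IsWall A c H) (hH : H ∈ B) (hBA : B ⊆ A) : IsWall B c H :=
  let ⟨_, x, hx0, hx⟩ := h; ⟨hH, x, hx0, fun w hw => hx w (hBA hw)⟩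

lemma congr (h : IsWall B c H) (hcc' : ∀ v ∈ B, c v = c' v) : IsWall B c' H :=
  let ⟨hH, x, hx0, hx⟩ := h; ⟨hH, x, hx0, fun w hw => hcc' w hw ▸ hx w hw⟩

/-- Push the wall point slightly across `H`. -/
lemma isChamber_update (hB : IsArrangement B) (h : IsWall B c H) :
    IsChamber B (Function.update c H (!c H)) := by
  obtain ⟨hH, x, hx0, hx⟩ := hB.isWall_iff.1 h
  obtain ⟨t, ht, hxt⟩ := hx.exists_pos_add_smul (-boolSign (c H) • H)
  refine ⟨x + t • -boolSign (c H) • H, fun v hv => ?_⟩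
  rcases eq_or_ne v H with rfl | hvH
  · have key : boolSign (!c v) * (v ⬝ᵥ (x + t • -boolSign (c v) • v)) = t * (v ⬝ᵥ v) := by
      simp only [dotProduct_add, dotProduct_smul, hx0, boolSign_not, smul_eq_mul]
      linear_combination t * (v ⬝ᵥ v) * boolSign_mul_self (c v)
    rw [ite_sign_iff, Function.update_self, key]
    exact mul_pos ht (dotProduct_self_pos (hB.1 v hv))
  · simpa [Function.update_of_ne hvH] using hxt v (mem_erase.2 ⟨hvH, hv⟩)

end IsWall

lemma dense_setOf_dotProduct_ne_zero {l : V n} (hl : l ≠ 0) : Dense {x : V n | l ⬝ᵥ x ≠ 0} := by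
  have hint : interior (LinearMap.ker (hypl l) : Set (V n)) = ∅ := by
    refine Set.not_nonempty_iff_eq_empty.1 fun hne => hl (dotProduct_eq _ _ fun x => ?_)
    have hx : x ∈ LinearMap.ker (hypl l) := Submodule.eq_top_of_nonempty_interior' _ hne ▸ trivial
    simpa [hypl] using hx
  rw [interior_eq_empty_iff_dense_compl] at hint
  simpa [Set.compl_def, hypl] using hint

lemma Realizes.exists_forall_dotProduct_ne_zero {A : Finset (V n)} {c : V n → Bool} {x : V n}
    (h : Realizes A c x) {S : Finset (V n)} (hS : ∀ l ∈ S, l ≠ 0) :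
    ∃ p, Realizes A c p ∧ ∀ l ∈ S, l ⬝ᵥ p ≠ 0 := by
  have hD : Dense (⋂ l ∈ (S : Set (V n)), {x : V n | l ⬝ᵥ x ≠ 0}) :=
    dense_biInter_of_isOpen (fun _ _ => isOpen_ne_fun (by fun_prop) continuous_const)
      S.countable_toSet fun l hl => dense_setOf_dotProduct_ne_zero (hS l hl)
  obtain ⟨p, hp, hpS⟩ := hD.inter_open_nonempty _ (isOpen_setOf_realizes A c) ⟨x, h⟩
  exact ⟨p, hp, by simpa using hpS⟩

lemma dotProduct_segment (v p q : V n) (t : ℝ) :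
    v ⬝ᵥ (p + t • (q - p)) = v ⬝ᵥ p + t * (v ⬝ᵥ q - v ⬝ᵥ p) := by
  simp [dotProduct_add, dotProduct_sub]

/-- `(w ⬝ᵥ q) • v - (v ⬝ᵥ q) • w` vanishes on `q` and on `ker v ∩ ker w`, so it vanishes on
every point of the segment through `q` that meets `ker v ∩ ker w`. -/
lemma dotProduct_segment_ne_zero {p q v w : V n} (hq : v ⬝ᵥ q ≠ 0)
    (hp : ((w ⬝ᵥ q) • v - (v ⬝ᵥ q) • w) ⬝ᵥ p ≠ 0) {t : ℝ}
    (hv : v ⬝ᵥ (p + t • (q - p)) = 0) : w ⬝ᵥ (p + t • (q - p)) ≠ 0 := by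
  intro hw
  have key : (1 - t) * (((w ⬝ᵥ q) • v - (v ⬝ᵥ q) • w) ⬝ᵥ p) = 0 := by
    rw [dotProduct_segment] at hv hw
    simp only [sub_dotProduct, smul_dotProduct, smul_eq_mul]
    linear_combination (w ⬝ᵥ q) * hv - (v ⬝ᵥ q) * hw
  rcases mul_eq_zero.1 key with ht | h
  · obtain rfl : t = 1 := by linarith
    exact hq (by simpa using hv)
  · exact hp h

lemma crossing_time_mem_Ioo {s P Q : ℝ} (hP : 0 < s * P) (hQ : s * Q < 0) :
    P / (P - Q) ∈ Set.Ioo 0 1 := by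
  have hs : s ≠ 0 := by rintro rfl; simp at hP
  rw [← mul_div_mul_left P (P - Q) hs, mul_sub]
  exact ⟨div_pos hP (by linarith), (div_lt_one (by linarith)).2 (by linarith)⟩

lemma vanishes_at_crossing_time {s P Q : ℝ} (hP : 0 < s * P) (hQ : s * Q < 0) :
    P + P / (P - Q) * (Q - P) = 0 := by
  have hPQ : P - Q ≠ 0 := fun h => by rw [sub_eq_zero.1 h] at hP; linarith
  field_simp; ring

lemma pos_of_lt_crossing_time {s P Q t : ℝ} (hP : 0 < s * P) (hQ : s * Q < 0)
    (ht : t < P / (P - Q)) : 0 < s * (P + t * (Q - P)) := by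
  have hPQ : P - Q ≠ 0 := fun h => by rw [sub_eq_zero.1 h] at hP; linarith
  have key : s * (P + t * (Q - P)) = (s * P - s * Q) * (P / (P - Q) - t) := by
    field_simp; ring
  rw [key]
  exact mul_pos (by linarith) (by linarith)

lemma pos_of_same_sign {s P Q t : ℝ} (hP : 0 < s * P) (hQ : 0 < s * Q) (ht0 : 0 ≤ t)
    (ht1 : t ≤ 1) : 0 < s * (P + t * (Q - P)) := by
  have key : s * (P + t * (Q - P)) = (1 - t) * (s * P) + t * (s * Q) := by ring
  rcases le_total (s * P) (s * Q) with h | h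
  · nlinarith [mul_nonneg ht0 (sub_nonneg.2 h)]
  · nlinarith [mul_nonneg (sub_nonneg.2 ht1) (sub_nonneg.2 h)]

lemma IsChamber.exists_realizes_generic {B : Finset (V n)} (hB : IsArrangement B)
    {c : V n → Bool} (hc : IsChamber B c) {q : V n} (hq : ∀ v ∈ B, v ⬝ᵥ q ≠ 0) :
    ∃ p, Realizes B c p ∧ ∀ v ∈ B, ∀ w ∈ B, v ≠ w → ((w ⬝ᵥ q) • v - (v ⬝ᵥ q) • w) ⬝ᵥ p ≠ 0 := by
  obtain ⟨x, hx⟩ := hc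
  obtain ⟨p, hp, hgen⟩ := hx.exists_forall_dotProduct_ne_zero
    (S := B.offDiag.image fun vw => (vw.2 ⬝ᵥ q) • vw.1 - (vw.1 ⬝ᵥ q) • vw.2) <| by
      simp only [mem_image, mem_offDiag]
      rintro _ ⟨⟨v, w⟩, ⟨hv, hw, hvw⟩, rfl⟩ h
      refine hq w hw (LinearIndependent.pair_iff.1 (hB.linearIndependent_pair hv hw hvw)
        (w ⬝ᵥ q) (-(v ⬝ᵥ q)) ?_).1
      simpa [sub_eq_add_neg] using h
  exact ⟨p, hp, fun v hv w hw hvw =>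
    hgen _ (mem_image_of_mem _ (a := (v, w)) (mem_offDiag.2 ⟨hv, hw, hvw⟩))⟩

/-- Walk from a generic point of `c` towards `d`: the first hyperplane crossed is a wall of `c`.
Genericity makes the first crossing unique. -/
lemma exists_isWall_mem_sepSet {B : Finset (V n)} (hB : IsArrangement B) {c d : V n → Bool}
    (hc : IsChamber B c) (hd : IsChamber B d) (hne : (SepSet B c d).Nonempty) :
    ∃ H ∈ SepSet B c d, IsWall B c H := by
  obtain ⟨q, hq⟩ := hd
  obtain ⟨p, hp, hgen⟩ := hc.exists_realizes_generic hB fun v hv => hq.ne_zero hv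
  have hsign : ∀ v ∈ B, 0 < boolSign (c v) * (v ⬝ᵥ p) ∧
      (v ∈ SepSet B c d → boolSign (c v) * (v ⬝ᵥ q) < 0) ∧
      (v ∉ SepSet B c d → 0 < boolSign (c v) * (v ⬝ᵥ q)) := by
    intro v hv
    have hqv := realizes_iff.1 hq v hv
    refine ⟨realizes_iff.1 hp v hv, ?_⟩
    simp only [mem_sepSet, hv, true_and, not_not]
    cases hcv : c v <;> cases hdv : d v <;> simp_all [boolSign]
  set τ : V n → ℝ := fun v => (v ⬝ᵥ p) / (v ⬝ᵥ p - v ⬝ᵥ q)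
  have hτ : ∀ v ∈ SepSet B c d, v ⬝ᵥ (p + τ v • (q - p)) = 0 := fun v hv => by
    rw [dotProduct_segment]
    have hv' := hsign v (sepSet_subset hv)
    exact vanishes_at_crossing_time hv'.1 (hv'.2.1 hv)
  obtain ⟨H, hH, hmin⟩ := exists_min_image (SepSet B c d) τ hne
  have hHB := sepSet_subset hH
  have hfirst : ∀ v ∈ SepSet B c d, v ≠ H → τ H < τ v := by
    refine fun v hv hvH => (hmin v hv).lt_of_ne fun h => ?_
    exact dotProduct_segment_ne_zero (hq.ne_zero hHB)
      (hgen H hHB v (sepSet_subset hv) (Ne.symm hvH)) (hτ H hH) (h ▸ hτ v hv)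
  have hτH := crossing_time_mem_Ioo (hsign H hHB).1 ((hsign H hHB).2.1 hH)
  refine ⟨H, hH, hB.isWall_iff.2 ⟨hHB, _, hτ H hH, realizes_iff.2 fun v hv => ?_⟩⟩
  obtain ⟨hvH, hvB⟩ := mem_erase.1 hv
  obtain ⟨hpv, hin, hout⟩ := hsign v hvB
  rw [dotProduct_segment]
  by_cases hvS : v ∈ SepSet B c d
  · exact pos_of_lt_crossing_time hpv (hin hvS) (hfirst v hvS hvH)
  · exact pos_of_same_sign hpv (hout hvS) hτH.1.le hτH.2.le

lemma exists_update_mem_sepSet {B : Finset (V n)} (hB : IsArrangement B) {c d : V n → Bool}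
    (hc : IsChamber B c) (hd : IsChamber B d) (hne : (SepSet B c d).Nonempty) :
    ∃ H ∈ SepSet B c d, IsChamber B (Function.update c H (!c H)) :=
  (exists_isWall_mem_sepSet hB hc hd hne).imp fun _ ⟨hH, hw⟩ => ⟨hH, hw.isChamber_update hB⟩

lemma mul_nonpos_of_mul_add_mul_eq_zero {x y p q : ℝ} (hp : 0 < p) (hq : 0 < q)
    (h : x * p + y * q = 0) : x * y ≤ 0 := by
  have key : x * y * p = -(y ^ 2 * q) := by linear_combination y * h
  nlinarith [mul_nonneg (sq_nonneg y) hq.le]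

lemma eq_zero_iff_of_mul_add_mul_eq_zero {x y p q : ℝ} (hp : 0 < p) (hq : 0 < q)
    (h : x * p + y * q = 0) : x = 0 ↔ y = 0 := by
  constructor <;> rintro rfl <;> simpa [hp.ne', hq.ne'] using h

lemma eq_zero_of_pairwise_pos_combination {a b c p₁ p₂ q₁ q₂ r₁ r₂ : ℝ} (hp₁ : 0 < p₁)
    (hp₂ : 0 < p₂) (hq₁ : 0 < q₁) (hq₂ : 0 < q₂) (hr₁ : 0 < r₁) (hr₂ : 0 < r₂)
    (h₁ : b * p₁ + c * p₂ = 0) (h₂ : a * q₁ + c * q₂ = 0)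
    (h₃ : a * r₁ + b * r₂ = 0) : a = 0 ∧ b = 0 ∧ c = 0 := by
  have hab := eq_zero_iff_of_mul_add_mul_eq_zero hr₁ hr₂ h₃
  have hac := eq_zero_iff_of_mul_add_mul_eq_zero hq₁ hq₂ h₂
  by_cases ha : a = 0
  · exact ⟨ha, hab.1 ha, hac.1 ha⟩
  have hb : b ≠ 0 := mt hab.2 ha
  have hc : c ≠ 0 := mt hac.2 ha
  have h1 := mul_nonpos_of_mul_add_mul_eq_zero hp₁ hp₂ h₁
  have h2 := (mul_nonpos_of_mul_add_mul_eq_zero hq₁ hq₂ h₂).lt_of_ne (mul_ne_zero ha hc)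
  have h3 := (mul_nonpos_of_mul_add_mul_eq_zero hr₁ hr₂ h₃).lt_of_ne (mul_ne_zero ha hb)
  nlinarith [mul_pos_of_neg_of_neg h2 h3, sq_nonneg a]

/-- The three normals are linearly dependent; evaluating a dependency at the three wall points
forces its coefficients to vanish. -/
lemma IsArrangement.false_of_three_walls {B : Finset (V n)} (hB : IsArrangement B)
    {W : Submodule ℝ (V n)} (hW : Module.finrank ℝ W ≤ 2) (hBW : ∀ v ∈ B, v ∈ W)
    {c : V n → Bool} {v₁ v₂ v₃ : V n} (h₁ : IsWall B c v₁) (h₂ : IsWall B c v₂)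
    (h₃ : IsWall B c v₃) (h₁₂ : v₁ ≠ v₂) (h₁₃ : v₁ ≠ v₃) (h₂₃ : v₂ ≠ v₃) : False := by
  obtain ⟨hv₁, x₁, hx₁, hr₁⟩ := hB.isWall_iff.1 h₁
  obtain ⟨hv₂, x₂, hx₂, hr₂⟩ := hB.isWall_iff.1 h₂
  obtain ⟨hv₃, x₃, hx₃, hr₃⟩ := hB.isWall_iff.1 h₃
  have hdep : ¬ LinearIndependent ℝ ![v₁, v₂, v₃] := fun hli => by
    have hle : Submodule.span ℝ (Set.range ![v₁, v₂, v₃]) ≤ W := by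
      rw [Submodule.span_le, Set.range_subset_iff]
      intro i; fin_cases i
      exacts [hBW _ hv₁, hBW _ hv₂, hBW _ hv₃]
    have := (finrank_span_eq_card hli).symm.trans_le ((Submodule.finrank_mono hle).trans hW)
    simp at this
  obtain ⟨g, hg, i, hi⟩ := Fintype.not_linearIndependent_iff.1 hdep
  have e : ∀ x, g 0 * (v₁ ⬝ᵥ x) + g 1 * (v₂ ⬝ᵥ x) + g 2 * (v₃ ⬝ᵥ x) = 0 := fun x => by
    simpa [Fin.sum_univ_three, add_dotProduct] using congrArg (· ⬝ᵥ x) hg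
  have pos : ∀ {v w x : V n}, Realizes (B.erase w) c x → v ∈ B → v ≠ w →
      0 < boolSign (c v) * (v ⬝ᵥ x) :=
    fun hr hv hvw => realizes_iff.1 hr _ (mem_erase.2 ⟨hvw, hv⟩)
  have e₁ := e x₁; have e₂ := e x₂; have e₃ := e x₃
  simp only [hx₁, hx₂, hx₃, mul_zero, zero_add, add_zero] at e₁ e₂ e₃
  rw [mul_eq_boolSign_mul_mul (c v₂) (g 1), mul_eq_boolSign_mul_mul (c v₃) (g 2)] at e₁
  rw [mul_eq_boolSign_mul_mul (c v₁) (g 0), mul_eq_boolSign_mul_mul (c v₃) (g 2)] at e₂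
  rw [mul_eq_boolSign_mul_mul (c v₁) (g 0), mul_eq_boolSign_mul_mul (c v₂) (g 1)] at e₃
  obtain ⟨g₀, g₁, g₂⟩ := eq_zero_of_pairwise_pos_combination
    (pos hr₁ hv₂ h₁₂.symm) (pos hr₁ hv₃ h₁₃.symm) (pos hr₂ hv₁ h₁₂) (pos hr₂ hv₃ h₂₃.symm)
    (pos hr₃ hv₁ h₁₃) (pos hr₃ hv₂ h₂₃) e₁ e₂ e₃
  fin_cases i <;> simp_all [boolSign_ne_zero]

section Localization

variable {A : Finset (V n)} {u w v : V n}

lemma loc_subset : loc A u w ⊆ A := filter_subset _ _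

lemma mem_loc_left (hu : u ∈ A) : u ∈ loc A u w := mem_filter.2 ⟨hu, fun _ h _ => h⟩

lemma mem_loc_right (hw : w ∈ A) : w ∈ loc A u w := mem_filter.2 ⟨hw, fun _ _ h => h⟩

lemma mem_span_of_mem_loc (hv : v ∈ loc A u w) : v ∈ Submodule.span ℝ (Set.range ![u, w]) := by
  have hker : ⨅ i, LinearMap.ker (![hypl u, hypl w] i) ≤ LinearMap.ker (hypl v) := by
    intro x hx
    simp only [Submodule.mem_iInf, LinearMap.mem_ker, Fin.forall_fin_two] at hx
    exact (mem_filter.1 hv).2 x hx.1 hx.2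
  obtain ⟨a, ha⟩ := (Submodule.mem_span_range_iff_exists_fun ℝ).1 (mem_span_of_iInf_ker_le_ker hker)
  refine (Submodule.mem_span_range_iff_exists_fun ℝ).2 ⟨a, dotProduct_eq _ _ fun x => ?_⟩
  simpa [Fin.sum_univ_two, hypl, add_dotProduct] using LinearMap.congr_fun ha x

lemma IsArrangement.eq_or_eq_of_isWall_loc (hA : IsArrangement A) {c : V n → Bool} {G : V n}
    (hu : IsWall A c u) (hw : IsWall A c w) (huw : u ≠ w) (hG : IsWall (loc A u w) c G) :
    G = u ∨ G = w := by
  by_contra! h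
  exact (hA.mono loc_subset).false_of_three_walls ((finrank_range_le_card ![u, w]).trans (by simp))
    (fun _ => mem_span_of_mem_loc) (hu.mono (mem_loc_left hu.1) loc_subset)
    (hw.mono (mem_loc_right hw.1) loc_subset) hG huw (Ne.symm h.1) (Ne.symm h.2)

end Localization

lemma isConvex_sepSet {B : Finset (V n)} {c₀ j : V n → Bool} (hj : IsChamber B j) :
    IsConvex B c₀ (SepSet B c₀ j) := by
  intro H hH
  refine ⟨fun v => !j v, hj.neg, ?_, fun v hv => ?_⟩ <;> simp_all

lemma is2Closed_sepSet {A : Finset (V n)} {c₀ j : V n → Bool} (hj : IsChamber A j) :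
    Is2Closed A c₀ (SepSet A c₀ j) := fun _ _ _ => by
  rw [sepSet_inter_of_subset loc_subset]
  exact isConvex_sepSet (hj.mono loc_subset)

section Gluing

variable {A : Finset (V n)} {c e : V n → Bool} {u w : V n}

lemma IncidentLoc.isChamber_piecewise (hinc : IncidentLoc A c u w)
    (he : IsChamber (loc A u w) e) : IsChamber A ((loc A u w).piecewise e c) := by
  obtain ⟨z, hz0, hzoff⟩ := hinc
  obtain ⟨ξ, hξ⟩ := he
  have hz : Realizes (A \ loc A u w) c z := fun v hv =>
    hzoff v (mem_sdiff.1 hv).1 (mem_sdiff.1 hv).2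
  obtain ⟨t, ht, hzt⟩ := hz.exists_pos_add_smul ξ
  refine ⟨z + t • ξ, fun v hv => ?_⟩
  by_cases hvL : v ∈ loc A u w
  · rw [piecewise_eq_of_mem _ _ _ hvL, ite_sign_iff, dotProduct_add, hz0 v hvL, dotProduct_smul,
      smul_eq_mul, zero_add, mul_left_comm]
    exact mul_pos ht (realizes_iff.1 hξ v hvL)
  · rw [piecewise_eq_of_notMem _ _ _ hvL]
    exact hzt v (mem_sdiff.2 ⟨hv, hvL⟩)

lemma sepSet_piecewise {L : Finset (V n)} {c₀ : V n → Bool} (hLA : L ⊆ A)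
    (hagree : ∀ v ∈ L, c₀ v = c v) :
    SepSet A c₀ (L.piecewise e c) = SepSet A c₀ c ∪ SepSet L c₀ e := by
  ext v
  by_cases hvL : v ∈ L
  · simp [hvL, hLA hvL, hagree v hvL]
  · simp [hvL]

end Gluing

/-- Newman's lemma, with termination witnessed by a measure. -/
theorem Relation.join_of_locallyConfluent {α : Type*} {r : α → α → Prop} (f : α → ℕ)
    (hf : ∀ a b, r a b → f b < f a) (hlc : ∀ a b c, r a b → r a c → Join (ReflTransGen r) b c)
    {a b c : α} (hab : ReflTransGen r a b) (hac : ReflTransGen r a c) :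
    Join (ReflTransGen r) b c := by
  induction hn : f a using Nat.strong_induction_on generalizing a b c with
  | _ k ih =>
  rcases hab.cases_head with rfl | ⟨b₁, hab₁, hb₁b⟩
  · exact ⟨c, hac, .refl⟩
  rcases hac.cases_head with rfl | ⟨c₁, hac₁, hc₁c⟩
  · exact ⟨b, .refl, hab⟩
  obtain ⟨d, hb₁d, hc₁d⟩ := hlc _ _ _ hab₁ hac₁
  obtain ⟨e, hbe, hde⟩ := ih _ (hn ▸ hf _ _ hab₁) hb₁b hb₁d rfl
  obtain ⟨g, hcg, heg⟩ := ih _ (hn ▸ hf _ _ hac₁) hc₁c (hc₁d.trans hde) rfl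
  exact ⟨g, hbe.trans heg, hcg⟩

def IsSepSet (A : Finset (V n)) (c₀ : V n → Bool) (S : Finset (V n)) : Prop :=
  ∃ c, IsChamber A c ∧ SepSet A c₀ c = S

/-- The cover relation of the chamber poset `P(A, c₀)`, on separation sets. -/
def Cover (A : Finset (V n)) (c₀ : V n → Bool) (S T : Finset (V n)) : Prop :=
  IsSepSet A c₀ S ∧ IsSepSet A c₀ T ∧ ∃ v ∉ S, T = insert v S

def CoverWithin (A : Finset (V n)) (c₀ : V n → Bool) (J S T : Finset (V n)) : Prop :=
  Cover A c₀ S T ∧ T ⊆ J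

namespace Cover

variable {A : Finset (V n)} {c₀ : V n → Bool} {S T : Finset (V n)}

lemma subset (h : Cover A c₀ S T) : S ⊆ T := by
  obtain ⟨-, -, v, -, rfl⟩ := h
  exact subset_insert v S

lemma card_sdiff_lt (h : Cover A c₀ S T) : (A \ T).card < (A \ S).card := by
  obtain ⟨-, ⟨c, -, hc⟩, v, hv, rfl⟩ := h
  have hvA : v ∈ A := sepSet_subset (hc ▸ mem_insert_self v S)
  rw [sdiff_insert]
  exact card_erase_lt_of_mem (mem_sdiff.2 ⟨hvA, hv⟩)

end Cover

lemma reflTransGen_cover_subset {A : Finset (V n)} {c₀ : V n → Bool} {S T : Finset (V n)}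
    (h : ReflTransGen (Cover A c₀) S T) : S ⊆ T := by
  induction h with
  | refl => exact subset_rfl
  | tail _ hcov ih => exact ih.trans hcov.subset

lemma reflTransGen_coverWithin_of_cover {A J : Finset (V n)} {c₀ : V n → Bool}
    {S T : Finset (V n)} (h : ReflTransGen (Cover A c₀) S T) (hTJ : T ⊆ J) :
    ReflTransGen (CoverWithin A c₀ J) S T := by
  induction h using ReflTransGen.head_induction_on with
  | refl => exact .refl
  | head hcov hrest ih => exact .head ⟨hcov, (reflTransGen_cover_subset hrest).trans hTJ⟩ ih

lemma reflTransGen_cover_empty {A : Finset (V n)} (hA : IsArrangement A) {c₀ m : V n → Bool}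
    (hc₀ : IsChamber A c₀) (hm : IsChamber A m) :
    ReflTransGen (Cover A c₀) ∅ (SepSet A c₀ m) := by
  induction hk : (SepSet A c₀ m).card using Nat.strong_induction_on generalizing m with
  | _ k ih =>
  obtain hS | hS := (SepSet A c₀ m).eq_empty_or_nonempty
  · rw [hS]
  obtain ⟨H, hH, hm'⟩ := exists_update_mem_sepSet hA hm hc₀ (sepSet_comm (A := A) ▸ hS)
  have hsep := sepSet_update_of_ne (A := A) (mem_sepSet.1 hH).2.symm
  have hH' : H ∈ SepSet A c₀ m := sepSet_comm (A := A) ▸ hH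
  refine .tail (ih _ ?_ hm' rfl) ⟨⟨_, hm', rfl⟩, ⟨m, hm, rfl⟩, H, by simp [hsep], ?_⟩
  · rw [hsep, ← hk]; exact card_erase_lt_of_mem hH'
  · rw [hsep, insert_erase hH']

lemma reflTransGen_cover_univ {B : Finset (V n)} (hB : IsArrangement B) {c₀ e : V n → Bool}
    (hc₀ : IsChamber B c₀) (he : IsChamber B e) :
    ReflTransGen (Cover B c₀) (SepSet B c₀ e) B := by
  induction hk : (B \ SepSet B c₀ e).card using Nat.strong_induction_on generalizing e with
  | _ k ih =>
  by_cases hfull : SepSet B c₀ e = B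
  · rw [hfull]
  obtain ⟨v, hv⟩ := sdiff_nonempty.2 (fun h => hfull (sepSet_subset.antisymm h))
  obtain ⟨H, hH, he'⟩ := exists_update_mem_sepSet hB he hc₀.neg
    ⟨v, mem_sepSet_not_iff.2 (mem_sdiff.1 hv)⟩
  obtain ⟨hHB, hHS⟩ := mem_sepSet_not_iff.1 hH
  have hsep := sepSet_update_of_eq hHB (by simpa [hHB] using hHS)
  have hcov : Cover B c₀ (SepSet B c₀ e) (SepSet B c₀ (Function.update e H (!e H))) :=
    ⟨⟨e, he, rfl⟩, ⟨_, he', rfl⟩, H, hHS, hsep⟩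
  exact .head hcov (ih _ (hk ▸ hcov.card_sdiff_lt) he' rfl)

section LocalConfluence

variable {A J : Finset (V n)} {c₀ m : V n → Bool} {u w : V n}

lemma isWall_of_sepSet_eq_insert (hA : IsArrangement A) {m' : V n → Bool} (hm : IsChamber A m)
    (hm' : IsChamber A m') (h : SepSet A c₀ m' = insert u (SepSet A c₀ m))
    (hu : u ∉ SepSet A c₀ m) : IsWall A m u := by
  have hsep : SepSet A m m' = {u} := by
    rw [sepSet_eq_symmDiff (c₀ := c₀), h]
    ext v; by_cases hv : v = u <;> simp [mem_symmDiff, hv, hu]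
  obtain ⟨H, hH, hwall⟩ := exists_isWall_mem_sepSet hA hm hm' (hsep ▸ singleton_nonempty u)
  rw [hsep, mem_singleton] at hH
  exact hH ▸ hwall

/-- Otherwise `m` would have a third wall in the localization. -/
lemma IsArrangement.eq_on_loc (hA : IsArrangement A) (hc₀ : IsChamber A c₀) (hm : IsChamber A m)
    (hu : IsWall A m u) (hw : IsWall A m w) (huw : u ≠ w) (huS : u ∉ SepSet A c₀ m)
    (hwS : w ∉ SepSet A c₀ m) : ∀ v ∈ loc A u w, c₀ v = m v := by
  by_contra! ⟨v, hvL, hv⟩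
  obtain ⟨H, hH, hwall⟩ := exists_isWall_mem_sepSet (hA.mono loc_subset) (hm.mono loc_subset)
    (hc₀.mono loc_subset) ⟨v, mem_sepSet.2 ⟨hvL, Ne.symm hv⟩⟩
  obtain ⟨hHL, hHm⟩ := mem_sepSet.1 hH
  have hHS : H ∈ SepSet A c₀ m := mem_sepSet.2 ⟨loc_subset hHL, Ne.symm hHm⟩
  rcases hA.eq_or_eq_of_isWall_loc hu hw huw hwall with rfl | rfl
  exacts [huS hHS, hwS hHS]

/-- If `H ∈ loc A u w` were outside `J`, convexity of `J` in the localization would give a wall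
of `c₀` (hence of `m`) outside `J`, but the only walls of `m` there are `u, w ∈ J`. -/
lemma IsArrangement.loc_subset_of_is2Closed (hA : IsArrangement A) (hc₀ : IsChamber A c₀)
    (hJ : Is2Closed A c₀ J) (hu : IsWall A m u) (hw : IsWall A m w) (huw : u ≠ w)
    (hagree : ∀ v ∈ loc A u w, c₀ v = m v) (huJ : u ∈ J) (hwJ : w ∈ J) : loc A u w ⊆ J := by
  intro H hHL
  by_contra hHJ
  obtain ⟨e, he, hHe, heJ⟩ := hJ u w (hA.codim2 hu.1 hw.1 huw) H
    (mem_sdiff.2 ⟨hHL, fun h => hHJ (mem_inter.1 h).1⟩)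
  obtain ⟨G, hGe, hG⟩ := exists_isWall_mem_sepSet (hA.mono loc_subset) (hc₀.mono loc_subset) he
    ⟨H, hHe⟩
  have hGJ : G ∈ J := by
    rcases hA.eq_or_eq_of_isWall_loc hu hw huw (hG.congr hagree) with rfl | rfl
    exacts [huJ, hwJ]
  obtain ⟨hGL, hGnot⟩ := mem_sdiff.1 (heJ hGe)
  exact hGnot (mem_inter.2 ⟨hGJ, hGL⟩)

lemma IncidentLoc.isSepSet_union (hinc : IncidentLoc A m u w)
    (hagree : ∀ v ∈ loc A u w, c₀ v = m v) {e : V n → Bool} (he : IsChamber (loc A u w) e) :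
    IsSepSet A c₀ (SepSet A c₀ m ∪ SepSet (loc A u w) c₀ e) :=
  ⟨_, hinc.isChamber_piecewise he, sepSet_piecewise loc_subset hagree⟩

lemma IncidentLoc.coverWithin_union (hinc : IncidentLoc A m u w)
    (hagree : ∀ v ∈ loc A u w, c₀ v = m v) (hmJ : SepSet A c₀ m ⊆ J) (hLJ : loc A u w ⊆ J)
    {T T' : Finset (V n)} (h : Cover (loc A u w) c₀ T T') :
    CoverWithin A c₀ J (SepSet A c₀ m ∪ T) (SepSet A c₀ m ∪ T') := by
  obtain ⟨⟨e, he, rfl⟩, ⟨e', he', rfl⟩, v, hv, hT'⟩ := h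
  have hvL : v ∈ loc A u w := sepSet_subset (hT' ▸ mem_insert_self v _)
  refine ⟨⟨hinc.isSepSet_union hagree he, hinc.isSepSet_union hagree he', v, ?_, ?_⟩,
    union_subset hmJ (sepSet_subset.trans hLJ)⟩
  · rw [mem_union, not_or]
    exact ⟨fun h => (mem_sepSet.1 h).2 (hagree v hvL), hv⟩
  · rw [hT', union_insert]

lemma sepSet_eq_union_sepSet_loc {m' : V n → Bool} {H : V n}
    (hagree : ∀ v ∈ loc A u w, c₀ v = m v) (h : SepSet A c₀ m' = insert H (SepSet A c₀ m))
    (hH : H ∈ loc A u w) : SepSet A c₀ m' = SepSet A c₀ m ∪ SepSet (loc A u w) c₀ m' := by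
  rw [← sepSet_inter_of_subset loc_subset, h]
  ext v
  by_cases hvH : v = H
  · simp [hvH, hH]
  · have : v ∈ loc A u w → v ∉ SepSet A c₀ m := fun hvL hvS => (mem_sepSet.1 hvS).2 (hagree v hvL)
    simp [hvH]; tauto

/-- Two covers `S ⋖ S ∪ {u}` and `S ⋖ S ∪ {w}` inside `J` rejoin at `S ∪ loc A u w`: by
bineighborliness the chamber of `S` touches `ker u ∩ ker w`, so any chamber of the localization
can be glued to it, and climbing through the localization stays inside `J`. -/
lemma IsArrangement.coverWithin_join (hA : IsArrangement A) (hc₀ : IsChamber A c₀)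
    (hbn : Bineighborly A c₀) (hJ : Is2Closed A c₀ J) {S T₁ T₂ : Finset (V n)}
    (h₁ : CoverWithin A c₀ J S T₁) (h₂ : CoverWithin A c₀ J S T₂) :
    Join (ReflTransGen (CoverWithin A c₀ J)) T₁ T₂ := by
  obtain ⟨⟨⟨m, hm, rfl⟩, ⟨m₁, hm₁, hT₁⟩, u, huS, rfl⟩, hT₁J⟩ := h₁
  obtain ⟨⟨-, ⟨m₂, hm₂, hT₂⟩, w, hwS, rfl⟩, hT₂J⟩ := h₂
  rcases eq_or_ne u w with rfl | huw
  · exact ⟨_, .refl, .refl⟩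
  have hu := isWall_of_sepSet_eq_insert hA hm hm₁ hT₁ huS
  have hw := isWall_of_sepSet_eq_insert hA hm hm₂ hT₂ hwS
  have hinc : IncidentLoc A m u w := hbn m hm u w hu hw
    (mem_sepSet_not_iff.2 ⟨hu.1, huS⟩) (mem_sepSet_not_iff.2 ⟨hw.1, hwS⟩)
  have hagree := hA.eq_on_loc hc₀ hm hu hw huw huS hwS
  have hmJ : SepSet A c₀ m ⊆ J := (subset_insert u _).trans hT₁J
  have hLJ := hA.loc_subset_of_is2Closed hc₀ hJ hu hw huw hagree
    (hT₁J (mem_insert_self u _)) (hT₂J (mem_insert_self w _))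
  have hclimb : ∀ {m'}, IsChamber A m' → ReflTransGen (CoverWithin A c₀ J)
      (SepSet A c₀ m ∪ SepSet (loc A u w) c₀ m') (SepSet A c₀ m ∪ loc A u w) := fun hm' =>
    ReflTransGen.lift (SepSet A c₀ m ∪ ·) (fun _ _ => hinc.coverWithin_union hagree hmJ hLJ) _ _
      (reflTransGen_cover_univ (hA.mono loc_subset) (hc₀.mono loc_subset) (hm'.mono loc_subset))
  refine ⟨SepSet A c₀ m ∪ loc A u w, ?_, ?_⟩
  · rw [← hT₁, sepSet_eq_union_sepSet_loc hagree hT₁ (mem_loc_left hu.1)]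
    exact hclimb hm₁
  · rw [← hT₂, sepSet_eq_union_sepSet_loc hagree hT₂ (mem_loc_right hw.1)]
    exact hclimb hm₂

end LocalConfluence

lemma isSepSet_of_reflTransGen_coverWithin {A J : Finset (V n)} {c₀ : V n → Bool}
    {S T : Finset (V n)} (h : ReflTransGen (CoverWithin A c₀ J) S T) (hS : IsSepSet A c₀ S)
    (hSJ : S ⊆ J) : IsSepSet A c₀ T ∧ T ⊆ J := by
  rcases h.cases_tail with rfl | ⟨_, -, hcov⟩
  exacts [⟨hS, hSJ⟩, ⟨hcov.1.2.1, hcov.2⟩]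

end

theorem bineighborly_join_twoClosure {n : ℕ} (A : Finset (V n)) (hA : IsArrangement A)
    (c₀ : V n → Bool) (hc₀ : IsChamber A c₀) (hbn : Bineighborly A c₀)
    (x y j : V n → Bool) (hx : IsChamber A x) (hy : IsChamber A y) (hj : IsChamber A j)
    (hubx : SepSet A c₀ x ⊆ SepSet A c₀ j) (huby : SepSet A c₀ y ⊆ SepSet A c₀ j)
    (hlub : ∀ e, IsChamber A e → SepSet A c₀ x ⊆ SepSet A c₀ e →
      SepSet A c₀ y ⊆ SepSet A c₀ e → SepSet A c₀ j ⊆ SepSet A c₀ e) :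
    Is2Closed A c₀ (SepSet A c₀ j) ∧
      SepSet A c₀ x ∪ SepSet A c₀ y ⊆ SepSet A c₀ j ∧
      ∀ J ⊆ A, Is2Closed A c₀ J → SepSet A c₀ x ∪ SepSet A c₀ y ⊆ J →
        SepSet A c₀ j ⊆ J := by
  refine ⟨is2Closed_sepSet hj, union_subset hubx huby, fun J _ hJ hxyJ => ?_⟩
  have hxJ := subset_union_left.trans hxyJ
  have hyJ := subset_union_right.trans hxyJ
  obtain ⟨U, hxU, hyU⟩ := Relation.join_of_locallyConfluent (fun S => (A \ S).card)
    (fun _ _ h => h.1.card_sdiff_lt) (fun _ _ _ => hA.coverWithin_join hc₀ hbn hJ)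
    (reflTransGen_coverWithin_of_cover (reflTransGen_cover_empty hA hc₀ hx) hxJ)
    (reflTransGen_coverWithin_of_cover (reflTransGen_cover_empty hA hc₀ hy) hyJ)
  obtain ⟨⟨e, he, rfl⟩, hUJ⟩ := isSepSet_of_reflTransGen_coverWithin hxU ⟨x, hx, rfl⟩ hxJ
  have hsub {S} (h : ReflTransGen (CoverWithin A c₀ J) S (SepSet A c₀ e)) : S ⊆ SepSet A c₀ e :=
    reflTransGen_cover_subset (ReflTransGen.mono (fun _ _ => And.left) _ _ h)
  exact (hlub e he (hsub hxU) (hsub hyU)).trans hUJ
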